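/- Let d ≥ 3, n ≥ 1, p > 0, and 0 ≤ α < (d−2)/(d−1); set a = 2(d−2)·γ(d,p,α) and b = d−2−α(d−1). Let φ : (0,∞) → ℝ be differentiable with φ ≥ 0, and let u > 0 satisfy 0 < φ(u) < a and suppose the derivative at u of the function g_φ(w) = w^b·φ(w)/(a − φ(w))^{1+2b/(n+2)} is nonnegative. Then Ψ_φ(u) − 2u·φ'(u)/(n+2) ≤ 0. -/

import Mathlib

open Finset

/-- `γ(d,p,α)` from the paper. -/
noncomputable def gam (d : ℕ) (p α : ℝ) : ℝ :=
  min 1 ((d : ℝ) ^ ((2 - p - α) / p)) * (1 - α * ((d : ℝ) - 1) / ((d : ℝ) - 2))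

/-- `Ψ_φ(u)` from the paper. -/
noncomputable def PsiPhi (d : ℕ) (p α : ℝ) (φ : ℝ → ℝ) (v : ℝ) : ℝ :=
  max 1 ((d : ℝ) ^ ((p + α - 2) / p)) * φ v
    - 2 * ((d : ℝ) - 2 - α * ((d : ℝ) - 1)) - 2 * v * deriv φ v / φ v

/-! The coefficient `max 1 (d ^ ((p + α - 2) / p))` of `Ψ_φ` is the reciprocal of the `min`
factor of `γ`, so it equals `2b / a` and is at least `1`, i.e. `a ≤ 2b`. With `c = 1 + 2b/(n+2)`,
`g_φ'(u) = u^(b-1) (a - φ)^(-c-1) K` where `K = (bφ + uφ')(a - φ) + c u φ φ'`, so `K ≥ 0`.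
Clearing the positive denominator `a φ (n+2) / 2`, the claim becomes
`b φ s (a - φ) + u φ' a (s + φ) ≥ 0` with `s = n + 2`; this is `s K + u φ (-φ') (2b - a)` when
`φ' ≤ 0`, and a sum of positive terms when `φ' > 0`. -/

lemma min_one_inv_mul_max_one {x : ℝ} (hx : 0 < x) : min 1 x⁻¹ * max 1 x = 1 := by
  rcases le_total 1 x with h | h
  · rw [max_eq_right h, min_eq_right (inv_le_one_of_one_le₀ h), inv_mul_cancel₀ hx.ne']
  · rw [max_eq_left h, min_eq_left (one_le_inv₀ hx |>.mpr h), one_mul]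

lemma two_mul_gam_mul_max_one {d : ℕ} (hd : 3 ≤ d) (p α : ℝ) :
    2 * ((d : ℝ) - 2) * gam d p α * max 1 ((d : ℝ) ^ ((p + α - 2) / p))
      = 2 * ((d : ℝ) - 2 - α * ((d : ℝ) - 1)) := by
  have hd2 : (0 : ℝ) < d - 2 := by
    have : (3 : ℝ) ≤ d := by exact_mod_cast hd
    linarith
  have hinv : (d : ℝ) ^ ((2 - p - α) / p) = ((d : ℝ) ^ ((p + α - 2) / p))⁻¹ := by
    rw [← Real.rpow_neg (Nat.cast_nonneg d)]
    ring_nf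
  have hone := min_one_inv_mul_max_one
    (Real.rpow_pos_of_pos (by linarith : (0 : ℝ) < d) ((p + α - 2) / p))
  have hfactor : ((d : ℝ) - 2) * (1 - α * ((d : ℝ) - 1) / ((d : ℝ) - 2))
      = (d : ℝ) - 2 - α * ((d : ℝ) - 1) := by
    field_simp
  rw [gam, hinv]
  linear_combination 2 * ((d : ℝ) - 2) * (1 - α * ((d : ℝ) - 1) / ((d : ℝ) - 2)) * hone
    + 2 * hfactor

lemma hasDerivAt_rpow_mul_div_sub_rpow {φ : ℝ → ℝ} {φ' u a b c : ℝ} (hu : 0 < u)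
    (hφa : φ u < a) (hφ : HasDerivAt φ φ' u) :
    HasDerivAt (fun w => w ^ b * φ w / (a - φ w) ^ c)
      (u ^ (b - 1) * (a - φ u) ^ (-c - 1)
        * ((b * φ u + u * φ') * (a - φ u) + c * u * φ u * φ')) u := by
  have hA : 0 < a - φ u := sub_pos.mpr hφa
  have hnum := (Real.hasDerivAt_rpow_const (p := b) (Or.inl hu.ne')).mul hφ
  have hden := ((hasDerivAt_const u a).sub hφ).rpow_const (p := c) (Or.inl hA.ne')
  refine (hnum.div hden (Real.rpow_pos_of_pos hA c).ne').congr_deriv ?_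
  have hu_b : u ^ b = u ^ (b - 1) * u := by
    rw [← Real.rpow_add_one hu.ne']; norm_num
  have hA_c : (a - φ u) ^ c = (a - φ u) ^ (c - 1) * (a - φ u) := by
    rw [← Real.rpow_add_one hA.ne']; norm_num
  have hA_sq : ((a - φ u) ^ c) ^ 2 = (a - φ u) ^ (c - 1) * (a - φ u) ^ (c + 1) := by
    rw [← Real.rpow_natCast, ← Real.rpow_mul hA.le, ← Real.rpow_add hA]; ring_nf
  have hA_neg : (a - φ u) ^ (-c - 1) = ((a - φ u) ^ (c + 1))⁻¹ := by
    rw [← Real.rpow_neg hA.le]; ring_nf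
  simp only [Pi.sub_apply, Pi.mul_apply]
  rw [hA_sq, hA_neg, hu_b, hA_c]
  field_simp
  ring

lemma psi_bound_of_deriv_factor_nonneg {a b s y y' u : ℝ} (hb : 0 < b) (hs : 0 < s)
    (hu : 0 < u) (hy : 0 < y) (hya : y < a) (ha : a ≤ 2 * b)
    (h : 0 ≤ (b * y + u * y') * (a - y) + (1 + 2 * b / s) * u * y * y') :
    2 * b / a * y - 2 * b - 2 * u * y' / y - 2 * u * y' / s ≤ 0 := by
  have ha0 : 0 < a := hy.trans hya
  have key : 0 ≤ b * y * s * (a - y) + u * y' * a * (s + y) := by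
    rcases le_or_gt y' 0 with hneg | hpos
    · have hsplit : b * y * s * (a - y) + u * y' * a * (s + y)
          = s * ((b * y + u * y') * (a - y) + (1 + 2 * b / s) * u * y * y')
            + u * y * (-y') * (2 * b - a) := by
        field_simp; ring
      rw [hsplit]
      exact add_nonneg (mul_nonneg hs.le h)
        (mul_nonneg (mul_nonneg (mul_nonneg hu.le hy.le) (neg_nonneg.2 hneg)) (sub_nonneg.2 ha))
    · have := sub_pos.2 hya
      positivity
  have hclear : 2 * b / a * y - 2 * b - 2 * u * y' / y - 2 * u * y' / s
      = -(2 / (a * y * s)) * (b * y * s * (a - y) + u * y' * a * (s + y)) := by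
    field_simp; ring
  rw [hclear]
  exact mul_nonpos_of_nonpos_of_nonneg (neg_nonpos.2 (by positivity)) key

theorem stmt_17_general {d n : ℕ} (hd : 3 ≤ d) (p α : ℝ)
    (hα1 : α < ((d : ℝ) - 2) / ((d : ℝ) - 1))
    (a b : ℝ) (ha : a = 2 * ((d : ℝ) - 2) * gam d p α)
    (hb : b = (d : ℝ) - 2 - α * ((d : ℝ) - 1))
    (φ : ℝ → ℝ) (hdiff : ∀ u, 0 < u → DifferentiableAt ℝ φ u)
    (u : ℝ) (hu : 0 < u) (h1 : 0 < φ u) (h2 : φ u < a)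
    (hg : 0 ≤ deriv
        (fun w => w ^ b * φ w / (a - φ w) ^ (1 + 2 * b / ((n : ℝ) + 2))) u) :
    PsiPhi d p α φ u - 2 * u * deriv φ u / ((n : ℝ) + 2) ≤ 0 := by
  have hd1 : (0 : ℝ) < d - 1 := by
    have : (3 : ℝ) ≤ d := by exact_mod_cast hd
    linarith
  have hb0 : 0 < b := by
    rw [hb]
    linarith [(lt_div_iff₀ hd1).mp hα1]
  have ha0 : 0 < a := h1.trans h2
  have haM : a * max 1 ((d : ℝ) ^ ((p + α - 2) / p)) = 2 * b := by
    rw [ha, hb, two_mul_gam_mul_max_one hd]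
  have hM : max 1 ((d : ℝ) ^ ((p + α - 2) / p)) = 2 * b / a := by
    rw [← haM]
    field_simp
  have ha2b : a ≤ 2 * b := haM ▸ le_mul_of_one_le_right ha0.le (le_max_left _ _)
  have hK := nonneg_of_mul_nonneg_right
    ((hasDerivAt_rpow_mul_div_sub_rpow hu h2 (hdiff u hu).hasDerivAt).deriv ▸ hg)
    (mul_pos (Real.rpow_pos_of_pos hu _) (Real.rpow_pos_of_pos (sub_pos.2 h2) _))
  rw [PsiPhi, hM, ← hb]
  exact psi_bound_of_deriv_factor_nonneg hb0 (by positivity) hu h1 h2 ha2b hK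

theorem stmt_17 {d n : ℕ} (hd : 3 ≤ d) (hn : 1 ≤ n) (p α : ℝ) (hp : 0 < p)
    (hα0 : 0 ≤ α) (hα1 : α < ((d : ℝ) - 2) / ((d : ℝ) - 1))
    (a b : ℝ) (ha : a = 2 * ((d : ℝ) - 2) * gam d p α)
    (hb : b = (d : ℝ) - 2 - α * ((d : ℝ) - 1))
    (φ : ℝ → ℝ) (hdiff : ∀ u, 0 < u → DifferentiableAt ℝ φ u)
    (hφ : ∀ u, 0 < u → 0 ≤ φ u)
    (u : ℝ) (hu : 0 < u) (h1 : 0 < φ u) (h2 : φ u < a)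
    (hg : 0 ≤ deriv
        (fun w => w ^ b * φ w / (a - φ w) ^ (1 + 2 * b / ((n : ℝ) + 2))) u) :
    PsiPhi d p α φ u - 2 * u * deriv φ u / ((n : ℝ) + 2) ≤ 0 :=
  stmt_17_general hd p α hα1 a b ha hb φ hdiff u hu h1 h2 hg
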